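/- The natural homomorphism from the free group on the two-element set {a, k} to G (sending the generators a, k to the images of a, k in G) is injective; moreover its image is a normal subgroup of G. -/
import Mathlib


/-- The four generators θ₁, θ₂, a, k of the free group `F` on four letters. -/
def theta1 : FreeGroup (Fin 4) := FreeGroup.of 0
def theta2 : FreeGroup (Fin 4) := FreeGroup.of 1
def aF : FreeGroup (Fin 4) := FreeGroup.of 2
def kF : FreeGroup (Fin 4) := FreeGroup.of 3

/-- The four defining relators θᵢ⁻¹aθᵢa⁻¹ and θᵢ⁻¹kθᵢa⁻¹k⁻¹, i = 1,2. -/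
def rels : Set (FreeGroup (Fin 4)) :=
  {theta1⁻¹ * aF * theta1 * aF⁻¹, theta2⁻¹ * aF * theta2 * aF⁻¹,
   theta1⁻¹ * kF * theta1 * aF⁻¹ * kF⁻¹, theta2⁻¹ * kF * theta2 * aF⁻¹ * kF⁻¹}

/-- The group `G = ⟨θ₁, θ₂, a, k ∣ aᶿⁱ = a, kᶿⁱ = ka⟩`. -/
abbrev G : Type := PresentedGroup rels

/-- The quotient map `F → G`. -/
def π : FreeGroup (Fin 4) →* G := PresentedGroup.mk rels

/-- The natural homomorphism from the free group on `{a, k}` (with `a = of 0`,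
`k = of 1`) to `G`, sending the generators to the images of `a`, `k` in `G`. -/
def iotaAK : FreeGroup (Fin 2) →* G :=
  FreeGroup.lift (fun i => if i = 0 then π aF else π kF)

-- auxiliary development
namespace AKAux

open FreeGroup SemidirectProduct

/-- forward automorphism a ↦ a, k ↦ k a⁻¹ -/
def αf : FreeGroup (Fin 2) →* FreeGroup (Fin 2) :=
  FreeGroup.lift (fun i => if i = 0 then .of 0 else .of 1 * (.of 0)⁻¹)

def αb : FreeGroup (Fin 2) →* FreeGroup (Fin 2) :=
  FreeGroup.lift (fun i => if i = 0 then .of 0 else .of 1 * .of 0)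

def αAut : MulAut (FreeGroup (Fin 2)) :=
  MonoidHom.toMulEquiv αf αb
    (FreeGroup.ext_hom _ _ (by intro a; fin_cases a <;> simp [αf, αb]))
    (FreeGroup.ext_hom _ _ (by intro a; fin_cases a <;> simp [αf, αb]))

def φQ : FreeGroup (Fin 2) →* MulAut (FreeGroup (Fin 2)) :=
  FreeGroup.lift (fun _ => αAut)

abbrev H : Type := FreeGroup (Fin 2) ⋊[φQ] FreeGroup (Fin 2)

def fgen : Fin 4 → H := fun x =>
  if x = 0 then inr (.of 0) else if x = 1 then inr (.of 1)
  else if x = 2 then inl (.of 0) else inl (.of 1)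

lemma fgen0 : fgen 0 = inr (.of 0) := rfl
lemma fgen1 : fgen 1 = inr (.of 1) := rfl
lemma fgen2 : fgen 2 = inl (.of 0) := rfl
lemma fgen3 : fgen 3 = inl (.of 1) := rfl

lemma hα : ∀ j : Fin 2, φQ (FreeGroup.of j) = αAut := fun _ => FreeGroup.lift_apply_of

lemma conj_lem (g n : FreeGroup (Fin 2)) :
    (inr g : H)⁻¹ * inl n * inr g = inl ((φQ g)⁻¹ n) := by
  rw [← _root_.map_inv inr]; exact (inl_aut_inv g n).symm

lemma αAut_inv_apply (n : FreeGroup (Fin 2)) : (αAut)⁻¹ n = αb n := rfl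

lemma hrels : ∀ r ∈ rels, FreeGroup.lift fgen r = 1 := by
  intro r hr
  rcases hr with h | h | h | h <;> subst h <;>
    simp only [theta1, theta2, aF, kF, _root_.map_mul, _root_.map_inv, FreeGroup.lift_apply_of,
      fgen0, fgen1, fgen2, fgen3] <;>
    rw [conj_lem, hα, αAut_inv_apply] <;>
    simp only [αb, FreeGroup.lift_apply_of, show ((1:Fin 2) = 0) = False by simp, if_false,
      if_true, reduceIte, _root_.map_mul] <;>
    group

def Φ : G →* H := PresentedGroup.toGroup hrels

lemma Φ_π (w : FreeGroup (Fin 4)) : Φ (π w) = FreeGroup.lift fgen w := rfl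

def fθ : FreeGroup (Fin 2) →* G :=
  FreeGroup.lift (fun i => if i = 0 then π theta1 else π theta2)

lemma relG : ∀ r ∈ rels, π r = 1 := fun r hr =>
  (QuotientGroup.eq_one_iff r).2 (Subgroup.subset_normalClosure hr)

lemma aux1 {Γ : Type*} [Group Γ] {t a : Γ} (h : t⁻¹ * a * t * a⁻¹ = 1) :
    t * a * t⁻¹ = a := by
  have h' : t⁻¹ * a * t = a := by
    have := congrArg (· * a) h
    simpa [mul_assoc] using this
  have hcomm : a * t = t * a := by
    have := congrArg (t * ·) h'
    simpa [mul_assoc] using this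
  rw [show t * a = a * t from hcomm.symm, mul_assoc]
  simp

lemma aux2 {Γ : Type*} [Group Γ] {t k a : Γ} (h : t⁻¹ * k * t * a⁻¹ * k⁻¹ = 1)
    (hc : t * a * t⁻¹ = a) : t * k * t⁻¹ = k * a⁻¹ := by
  have h' : t⁻¹ * k * t = k * a := by
    have := congrArg (· * (k * a)) h
    simpa [mul_assoc] using this
  have h2 : t * (k * a) * t⁻¹ = k := by rw [← h']; group
  have h3 : t * (k * a) * t⁻¹ = t * k * t⁻¹ * (t * a * t⁻¹) := by group
  rw [h3, hc] at h2
  exact eq_mul_inv_of_mul_eq h2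

def tG (j : Fin 2) : G := if j = 0 then π theta1 else π theta2

lemma fθ_of (j : Fin 2) : fθ (FreeGroup.of j) = tG j := FreeGroup.lift_apply_of

lemma conj_a (j : Fin 2) : tG j * π aF * (tG j)⁻¹ = π aF := by
  fin_cases j
  · refine aux1 ?_
    have := relG _ (show theta1⁻¹ * aF * theta1 * aF⁻¹ ∈ rels by simp [rels])
    simp only [_root_.map_mul, _root_.map_inv] at this
    simpa [tG] using this
  · refine aux1 ?_
    have := relG _ (show theta2⁻¹ * aF * theta2 * aF⁻¹ ∈ rels by simp [rels])
    simp only [_root_.map_mul, _root_.map_inv] at this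
    simpa [tG] using this

lemma conj_k (j : Fin 2) : tG j * π kF * (tG j)⁻¹ = π kF * (π aF)⁻¹ := by
  have hc := conj_a j
  fin_cases j
  · refine aux2 ?_ (by simpa [tG] using hc)
    have := relG _ (show theta1⁻¹ * kF * theta1 * aF⁻¹ * kF⁻¹ ∈ rels by simp [rels])
    simp only [_root_.map_mul, _root_.map_inv] at this
    simpa [tG] using this
  · refine aux2 ?_ (by simpa [tG] using hc)
    have := relG _ (show theta2⁻¹ * kF * theta2 * aF⁻¹ * kF⁻¹ ∈ rels by simp [rels])
    simp only [_root_.map_mul, _root_.map_inv] at this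
    simpa [tG] using this

lemma iota_of0 : iotaAK (FreeGroup.of 0) = π aF := by
  simp [iotaAK]

lemma iota_of1 : iotaAK (FreeGroup.of 1) = π kF := by
  simp [iotaAK]

lemma key : ∀ g n : FreeGroup (Fin 2),
    iotaAK (φQ g n) = fθ g * iotaAK n * (fθ g)⁻¹ := by
  intro g
  refine FreeGroup.induction_on g ?_ ?_ ?_ ?_
  · intro n; simp
  · intro j
    have hhom : iotaAK.comp (φQ (FreeGroup.of j)).toMonoidHom
        = (MulAut.conj (fθ (FreeGroup.of j))).toMonoidHom.comp iotaAK := by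
      refine FreeGroup.ext_hom _ _ ?_
      intro i
      simp only [MonoidHom.comp_apply, MulEquiv.coe_toMonoidHom, MulAut.conj_apply, hα,
        fθ_of]
      rcases show i = 0 ∨ i = 1 by omega with rfl | rfl
      · have h0 : (αAut : MulAut (FreeGroup (Fin 2))) (FreeGroup.of 0) = FreeGroup.of 0 := by
          simp [αAut, MonoidHom.toMulEquiv, αf]
        rw [h0, iota_of0, conj_a]
      · have h1 : (αAut : MulAut (FreeGroup (Fin 2))) (FreeGroup.of 1)
            = FreeGroup.of 1 * (FreeGroup.of 0)⁻¹ := by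
          simp [αAut, MonoidHom.toMulEquiv, αf]
        rw [h1, _root_.map_mul, _root_.map_inv, iota_of0, iota_of1, conj_k]
    intro n
    exact DFunLike.congr_fun hhom n
  · intro j h n
    have h' := h ((φQ (FreeGroup.of j))⁻¹ n)
    rw [show φQ (FreeGroup.of j) ((φQ (FreeGroup.of j))⁻¹ n) = n by simp] at h'
    rw [_root_.map_inv, _root_.map_inv]
    rw [h']
    group
  · intro x y hx hy n
    rw [_root_.map_mul, _root_.map_mul]
    simp only [MulAut.mul_apply]
    rw [hx, hy]
    group

lemma compat : ∀ g : FreeGroup (Fin 2),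
    iotaAK.comp (φQ g).toMonoidHom = (MulAut.conj (fθ g)).toMonoidHom.comp iotaAK := by
  intro g
  ext m
  simpa using key g (FreeGroup.of m)

def Ψ : H →* G := SemidirectProduct.lift iotaAK fθ compat

lemma Ψ_inl (n : FreeGroup (Fin 2)) : Ψ (inl n) = iotaAK n := by simp [Ψ]

lemma ΨΦ : ∀ g : G, Ψ (Φ g) = g := by
  have h : Ψ.comp Φ = MonoidHom.id G := by
    refine PresentedGroup.ext ?_
    intro x
    have hx : (PresentedGroup.of x : G) = π (FreeGroup.of x) := rfl
    rcases show x = 0 ∨ x = 1 ∨ x = 2 ∨ x = 3 by omega with rfl | rfl | rfl | rfl <;>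
      simp only [MonoidHom.comp_apply, MonoidHom.id_apply, hx, Φ_π, FreeGroup.lift_apply_of,
        fgen0, fgen1, fgen2, fgen3, Ψ, SemidirectProduct.lift_inl,
        SemidirectProduct.lift_inr] <;>
      simp [fθ, iotaAK, theta1, theta2, aF, kF]
  intro g
  exact DFunLike.congr_fun h g

lemma Φ_iota : Φ.comp iotaAK = (inl : FreeGroup (Fin 2) →* H) := by
  refine FreeGroup.ext_hom _ _ ?_
  intro i
  rcases show i = 0 ∨ i = 1 by omega with rfl | rfl
  · rw [MonoidHom.comp_apply, iota_of0, Φ_π]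
    simp [aF, fgen2]
  · rw [MonoidHom.comp_apply, iota_of1, Φ_π]
    simp [kF, fgen3]

end AKAux

/-- The natural map `F(a,k) → G` is injective, and its image is normal in `G`. -/
theorem ak_free_and_normal :
    Function.Injective iotaAK ∧ iotaAK.range.Normal := by
  open AKAux in
  constructor
  · intro x y hxy
    apply SemidirectProduct.inl_injective (φ := φQ)
    rw [← DFunLike.congr_fun Φ_iota x, ← DFunLike.congr_fun Φ_iota y]
    simpa using congrArg Φ hxy
  · have hker : iotaAK.range = (SemidirectProduct.rightHom.comp Φ).ker := by
      apply le_antisymm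
      · rintro _ ⟨x, rfl⟩
        rw [MonoidHom.mem_ker, MonoidHom.comp_apply,
          ← MonoidHom.comp_apply Φ iotaAK, Φ_iota]
        simp
      · intro g hg
        rw [MonoidHom.mem_ker, MonoidHom.comp_apply] at hg
        have hΦ : Φ g = SemidirectProduct.inl (Φ g).left := by
          ext
          · rfl
          · simpa using hg
        refine ⟨(Φ g).left, ?_⟩
        rw [← Ψ_inl, ← hΦ, ΨΦ]
    rw [hker]
    exact MonoidHom.normal_ker _
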